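/- Let m, n be positive integers and let r = (r_1, …, r_m) be integers with 0 ≤ r_i ≤ n, with conjugate tuple d = (d_1, …, d_n) defined by d_j = |{i ∈ [m] : r_i ≥ j}|. If c = (c_1, …, c_n) is a nonincreasing tuple of nonnegative integers majorized by d, then there exists a matrix A ∈ {0,1}^{m×n} with row sums r_i(A) = r_i for all i ∈ [m] and column sums c_j(A) = c_j for all j ∈ [n]. -/

import Mathlib

/-!
Ryser's argument, by induction on the number of columns. Put the ones of the last column, whose
sum `c n` is the smallest, in the `c n` rows of largest row sum, and delete that column. Writing
the prefix sums of the conjugate tuple as `∑ j < k, d j = ∑ i, min (r i) k`, one checks that the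
shortened row sums still majorize the remaining column sums.
-/

open Finset

section

variable {ι : Type*} [Fintype ι]

lemma sum_min_add_one (r : ι → ℕ) (k : ℕ) :
    ∑ i, min (r i) (k + 1) = ∑ i, min (r i) k + #{i | k < r i} := by
  rw [card_filter, ← sum_add_distrib]
  exact sum_congr rfl fun i _ => by split_ifs <;> omega

lemma sum_range_card_filter_lt (r : ι → ℕ) (k : ℕ) :
    ∑ j ∈ range k, #{i | j < r i} = ∑ i, min (r i) k := by
  induction k with
  | zero => simp
  | succ k ih => rw [sum_range_succ, ih, sum_min_add_one]

lemma exists_card_eq_forall_notMem_le {α : Type*} [LinearOrder α] (f : ι → α) {t : ℕ}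
    (ht : t ≤ Fintype.card ι) : ∃ S : Finset ι, #S = t ∧ ∀ i ∈ S, ∀ j ∉ S, f j ≤ f i := by
  classical
  induction t with
  | zero => exact ⟨∅, rfl, by simp⟩
  | succ t ih =>
    obtain ⟨S, hcard, htop⟩ := ih (by omega)
    obtain ⟨i₀, hi₀, hmax⟩ := exists_max_image Sᶜ f (by rw [← card_pos, card_compl]; omega)
    rw [mem_compl] at hi₀
    refine ⟨insert i₀ S, by rw [card_insert_of_notMem hi₀, hcard], fun i hi j hj => ?_⟩
    rw [mem_insert, not_or] at hj
    rcases mem_insert.1 hi with rfl | hi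
    · exact hmax j (mem_compl.2 hj.2)
    · exact htop i hi j hj.2

lemma sum_min_eq_sum_min_sub_add_card [DecidableEq ι] {r : ι → ℕ} {S : Finset ι}
    (hpos : ∀ i ∈ S, 0 < r i) (k : ℕ) :
    ∑ i, min (r i) k = ∑ i, min (r i - if i ∈ S then 1 else 0) k + #{i ∈ S | r i ≤ k} := by
  rw [card_filter, ← Fintype.sum_ite_mem S, ← sum_add_distrib]
  refine sum_congr rfl fun i _ => ?_
  by_cases hi : i ∈ S
  · have := hpos i hi
    simp only [hi, if_true]
    split_ifs <;> omega
  · simp [hi]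

section ColumnRemoval

variable {r : ι → ℕ} {c : ℕ → ℕ} {n : ℕ} {S : Finset ι}

lemma sum_range_add_card_filter_le (hc : AntitoneOn c (Set.Iio (n + 1)))
    (hmaj : ∀ k ≤ n + 1, ∑ j ∈ range k, c j ≤ ∑ i, min (r i) k)
    (hS : #S = c n) (htop : ∀ i ∈ S, ∀ j ∉ S, r j ≤ r i) {k : ℕ} (hk : k ≤ n) :
    ∑ j ∈ range k, c j + #{i ∈ S | r i ≤ k} ≤ ∑ i, min (r i) k := by
  obtain hs | ⟨i₀, hi₀⟩ := (S.filter (r · ≤ k)).eq_empty_or_nonempty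
  · rw [hs, card_empty, add_zero]
    exact hmaj k (by omega)
  rw [mem_filter] at hi₀
  -- `i₀ ∈ S` has `r i₀ ≤ k`, so every row with `r i > k` lies in `S`.
  have hlarge : #{i | k < r i} + #{i ∈ S | r i ≤ k} ≤ c n := by
    have hsub : univ.filter (k < r ·) ⊆ S.filter (¬ r · ≤ k) := by
      intro i hi
      simp only [mem_filter, mem_univ, true_and] at hi ⊢
      refine ⟨?_, by omega⟩
      by_contra hiS
      have := htop i₀ hi₀.1 i hiS
      omega
    have := card_le_card hsub
    have := card_filter_add_card_filter_not (s := S) (fun i => r i ≤ k)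
    omega
  have hck : c n ≤ c k := hc (by simp; omega) (by simp) hk
  have hmaj_succ := hmaj (k + 1) (by omega)
  rw [sum_range_succ, sum_min_add_one] at hmaj_succ
  omega

lemma pos_of_mem_top (hc : AntitoneOn c (Set.Iio (n + 1)))
    (hmaj : ∀ k ≤ n + 1, ∑ j ∈ range k, c j ≤ ∑ i, min (r i) k)
    (hS : #S = c n) (htop : ∀ i ∈ S, ∀ j ∉ S, r j ≤ r i) {i : ι} (hi : i ∈ S) : 0 < r i := by
  have h := sum_range_add_card_filter_le hc hmaj hS htop (Nat.zero_le n)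
  simp only [range_zero, sum_empty, _root_.min_zero, sum_const_zero, zero_add, Nat.le_zero,
    card_eq_zero, filter_eq_empty_iff] at h
  exact Nat.pos_of_ne_zero (h hi)

lemma le_of_notMem_top (hr : ∀ i, r i ≤ n + 1)
    (hmaj : ∀ k ≤ n + 1, ∑ j ∈ range k, c j ≤ ∑ i, min (r i) k)
    (hsum : ∑ j ∈ range (n + 1), c j = ∑ i, r i)
    (hS : #S = c n) (htop : ∀ i ∈ S, ∀ j ∉ S, r j ≤ r i) {i₀ : ι} (hi₀ : i₀ ∉ S) :
    r i₀ ≤ n := by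
  classical
  by_contra h
  have hsub : insert i₀ S ⊆ univ.filter (n < r ·) := by
    intro i hi
    rw [mem_filter]
    rcases mem_insert.1 hi with rfl | hi
    · exact ⟨mem_univ _, by omega⟩
    · exact ⟨mem_univ _, by have := htop i hi i₀ hi₀; omega⟩
  have hcard := card_le_card hsub
  rw [card_insert_of_notMem hi₀, hS] at hcard
  have hmin : ∑ i, r i = ∑ i, min (r i) (n + 1) :=
    sum_congr rfl fun i _ => (min_eq_left (hr i)).symm
  have := hmaj n (by omega)
  rw [sum_range_succ, hmin, sum_min_add_one] at hsum
  omega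

end ColumnRemoval

-- Columns are indexed by `ℕ` so that the induction can drop the last one; only `j < n` count.
def ZeroOneRealizable (r : ι → ℕ) (c : ℕ → ℕ) (n : ℕ) : Prop :=
  ∃ A : ι → ℕ → ℕ, (∀ i j, A i j = 0 ∨ A i j = 1) ∧
    (∀ i, ∑ j ∈ range n, A i j = r i) ∧ ∀ j < n, ∑ i, A i j = c j

lemma ZeroOneRealizable.add_column [DecidableEq ι] {r r' : ι → ℕ} {c : ℕ → ℕ} {n : ℕ}
    {S : Finset ι} (h : ZeroOneRealizable r' c n) (hr : ∀ i, r i = r' i + if i ∈ S then 1 else 0)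
    (hS : #S = c n) : ZeroOneRealizable r c (n + 1) := by
  obtain ⟨A, h01, hrow, hcol⟩ := h
  refine ⟨fun i => Function.update (A i) n (if i ∈ S then 1 else 0), fun i j => ?_, fun i => ?_,
    fun j hj => ?_⟩ <;> dsimp only
  · rw [Function.update_apply]
    split_ifs
    exacts [Or.inr rfl, Or.inl rfl, h01 i j]
  · rw [sum_range_succ, sum_update_of_notMem notMem_range_self, Function.update_self, hrow, hr]
  · obtain rfl | hjn := eq_or_ne j n
    · simp only [Function.update_self, Fintype.sum_ite_mem, sum_const, smul_eq_mul, mul_one, hS]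
    · simp only [Function.update_of_ne hjn]
      exact hcol j (by omega)

theorem zeroOneRealizable_of_sum_range_le_sum_min (n : ℕ) {r : ι → ℕ} (hr : ∀ i, r i ≤ n)
    {c : ℕ → ℕ} (hc : AntitoneOn c (Set.Iio n))
    (hmaj : ∀ k ≤ n, ∑ j ∈ range k, c j ≤ ∑ i, min (r i) k)
    (hsum : ∑ j ∈ range n, c j = ∑ i, r i) : ZeroOneRealizable r c n := by
  classical
  induction n generalizing r with
  | zero => exact ⟨0, by simp, fun i => by simpa using (Nat.le_zero.1 (hr i)).symm, by simp⟩
  | succ n ih =>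
    have hcn : c n ≤ Fintype.card ι :=
      calc c n ≤ ∑ j ∈ range 1, c j := by simpa using hc (by simp) (by simp) (Nat.zero_le n)
        _ ≤ ∑ i, min (r i) 1 := hmaj 1 (by omega)
        _ ≤ ∑ _i : ι, 1 := sum_le_sum fun i _ => min_le_right _ _
        _ = Fintype.card ι := by simp
    obtain ⟨S, hS, htop⟩ := exists_card_eq_forall_notMem_le r hcn
    have hpos := fun i => pos_of_mem_top (i := i) hc hmaj hS htop
    set r' : ι → ℕ := fun i => r i - if i ∈ S then 1 else 0
    have hr_eq : ∀ i, r i = r' i + if i ∈ S then 1 else 0 := fun i => by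
      by_cases hi : i ∈ S
      · simp only [r', if_pos hi]; have := hpos i hi; omega
      · simp [r', hi]
    have hr' : ∀ i, r' i ≤ n := fun i => by
      by_cases hi : i ∈ S
      · simp only [r', if_pos hi]; have := hr i; omega
      · simpa [r', hi] using le_of_notMem_top hr hmaj hsum hS htop hi
    have hmaj' : ∀ k ≤ n, ∑ j ∈ range k, c j ≤ ∑ i, min (r' i) k := fun k hk => by
      have := sum_range_add_card_filter_le hc hmaj hS htop hk
      rw [sum_min_eq_sum_min_sub_add_card hpos] at this
      simp only [r']
      omega
    have hsum' : ∑ j ∈ range n, c j = ∑ i, r' i := by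
      rw [sum_congr rfl fun i _ => hr_eq i, sum_add_distrib, Fintype.sum_ite_mem, sum_const,
        smul_eq_mul, mul_one, hS, sum_range_succ] at hsum
      omega
    exact (ih hr' (hc.mono (by simp)) hmaj' hsum').add_column hr_eq hS

end

lemma sum_filter_fin_val_lt {M : Type*} [AddCommMonoid M] (g : ℕ → M) {n k : ℕ} (hk : k ≤ n) :
    ∑ j ∈ univ.filter (fun j : Fin n => j.1 < k), g j = ∑ j ∈ range k, g j := by
  rw [sum_filter, Fin.sum_univ_eq_sum_range (fun j => if j < k then g j else 0), ← sum_filter]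
  congr 1
  ext j
  simp only [mem_filter, mem_range]
  omega

theorem exists_matrix_of_majorized_general (m n : ℕ)
    (r : Fin m → ℕ) (hr : ∀ i, r i ≤ n)
    (d : Fin n → ℕ)
    (hd : ∀ j : Fin n, d j = (univ.filter (fun i : Fin m => j.1 + 1 ≤ r i)).card)
    (c : Fin n → ℕ) (hc : Antitone c)
    (hmaj : ∀ k : ℕ, 1 ≤ k → k ≤ n →
        ∑ j ∈ univ.filter (fun j : Fin n => j.1 < k), c j ≤
          ∑ j ∈ univ.filter (fun j : Fin n => j.1 < k), d j)
    (hsum : ∑ j, c j = ∑ j, d j) :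
    ∃ A : Fin m → Fin n → ℕ, (∀ i j, A i j = 0 ∨ A i j = 1) ∧
      (∀ i, ∑ j, A i j = r i) ∧ (∀ j, ∑ i, A i j = c j) := by
  let c' : ℕ → ℕ := fun j => if h : j < n then c ⟨j, h⟩ else 0
  have hc'_val (j : Fin n) : c' j = c j := dif_pos j.isLt
  have hc' : AntitoneOn c' (Set.Iio n) := fun a ha b hb hab => by
    simp only [c', dif_pos (Set.mem_Iio.1 ha), dif_pos (Set.mem_Iio.1 hb)]
    exact hc hab
  have hc_sum {k : ℕ} (hk : k ≤ n) :
      ∑ j ∈ univ.filter (fun j : Fin n => j.1 < k), c j = ∑ j ∈ range k, c' j := by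
    simp_rw [← hc'_val]
    exact sum_filter_fin_val_lt c' hk
  have hd_sum {k : ℕ} (hk : k ≤ n) :
      ∑ j ∈ univ.filter (fun j : Fin n => j.1 < k), d j = ∑ i, min (r i) k := by
    simp_rw [hd, Nat.add_one_le_iff]
    rw [sum_filter_fin_val_lt (fun j => #{i | j < r i}) hk, sum_range_card_filter_lt]
  have hfull : univ.filter (fun j : Fin n => j.1 < n) = univ := filter_true_of_mem fun j _ => j.isLt
  obtain ⟨A, h01, hrow, hcol⟩ := zeroOneRealizable_of_sum_range_le_sum_min n hr hc'
    (fun k hk => by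
      obtain rfl | hk0 := k.eq_zero_or_pos
      · simp
      · rw [← hc_sum hk, ← hd_sum hk]
        exact hmaj k hk0 hk)
    (calc ∑ j ∈ range n, c' j = ∑ j, d j := by rw [← hc_sum le_rfl, hfull, hsum]
      _ = ∑ i, min (r i) n := by rw [← hd_sum le_rfl, hfull]
      _ = ∑ i, r i := sum_congr rfl fun i _ => min_eq_left (hr i))
  refine ⟨fun i j => A i j, fun i j => h01 i j, fun i => ?_, fun j => ?_⟩
  · rw [Fin.sum_univ_eq_sum_range (A i), hrow]
  · rw [← hc'_val, hcol j j.isLt]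

/-- If a nonincreasing tuple `c` of nonnegative integers is majorized by the conjugate
tuple `d` of `r`, then there is a (0,1)-matrix with row sums `r` and column sums `c`. -/
theorem exists_matrix_of_majorized (m n : ℕ) (hm : 0 < m) (hn : 0 < n)
    (r : Fin m → ℕ) (hr : ∀ i, r i ≤ n)
    (d : Fin n → ℕ)
    (hd : ∀ j : Fin n, d j = (univ.filter (fun i : Fin m => j.1 + 1 ≤ r i)).card)
    (c : Fin n → ℕ) (hc : Antitone c)
    (hmaj : ∀ k : ℕ, 1 ≤ k → k ≤ n →
        ∑ j ∈ univ.filter (fun j : Fin n => j.1 < k), c j ≤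
          ∑ j ∈ univ.filter (fun j : Fin n => j.1 < k), d j)
    (hsum : ∑ j, c j = ∑ j, d j) :
    ∃ A : Fin m → Fin n → ℕ, (∀ i j, A i j = 0 ∨ A i j = 1) ∧
      (∀ i, ∑ j, A i j = r i) ∧ (∀ j, ∑ i, A i j = c j) :=
  exists_matrix_of_majorized_general m n r hr d hd c hc hmaj hsum
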